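/- arXiv:2412.08338 — 7 statements merged into one kernel-verified Lean document; each statement's English description precedes it below -/
import Mathlib

section
/- If a finite simple graph G with p vertices and q edges admits an edge-graceful labeling, then p divides q^2 + q - p(p-1)/2. -/
def EdgeGraceful {V : Type*} [Fintype V] [DecidableEq V] (G : SimpleGraph V)
    [DecidableRel G.Adj] : Prop :=
  ∃ f : Sym2 V → ℕ,
    Set.BijOn f (G.edgeFinset : Set (Sym2 V)) (Set.Icc 1 G.edgeFinset.card) ∧
    Function.Bijective
      (fun v : V => ((∑ e ∈ G.incidenceFinset v, f e : ℕ) : ZMod (Fintype.card V)))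

theorem lo_theorem {V : Type*} [Fintype V] [DecidableEq V] (G : SimpleGraph V)
    [DecidableRel G.Adj] (h : EdgeGraceful G) :
    (Fintype.card V : ℤ) ∣
      ((G.edgeFinset.card : ℤ) ^ 2 + G.edgeFinset.card
        - (Fintype.card V : ℤ) * ((Fintype.card V : ℤ) - 1) / 2) := by
  classical
  obtain ⟨f, hbij, hplus⟩ := h
  set p := Fintype.card V with hp
  set q := G.edgeFinset.card with hq
  have hp0 : p ≠ 0 := by
    intro h0
    have hE : IsEmpty V := Fintype.card_eq_zero_iff.mp h0
    obtain ⟨v, -⟩ := hplus.surjective 0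
    exact hE.elim v
  haveI : NeZero p := ⟨hp0⟩
  -- double counting
  have hA : ∑ v : V, ∑ e ∈ G.incidenceFinset v, f e = 2 * ∑ e ∈ G.edgeFinset, f e := by
    have hcard : ∀ e ∈ G.edgeFinset, (Finset.univ.filter (fun v : V => v ∈ e)).card = 2 := by
      intro e he
      induction e with
      | h a b =>
        have hadj : G.Adj a b := by simpa using he
        have hab : a ≠ b := hadj.ne
        have : (Finset.univ.filter (fun v : V => v ∈ s(a, b))) = {a, b} := by
          ext v; simp [Sym2.mem_iff]
        rw [this, Finset.card_pair hab]
    calc ∑ v : V, ∑ e ∈ G.incidenceFinset v, f e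
        = ∑ v : V, ∑ e ∈ G.edgeFinset, if v ∈ e then f e else 0 := by
          refine Finset.sum_congr rfl fun v _ => ?_
          rw [SimpleGraph.incidenceFinset_eq_filter, Finset.sum_filter]
      _ = ∑ e ∈ G.edgeFinset, ∑ v : V, if v ∈ e then f e else 0 := Finset.sum_comm
      _ = ∑ e ∈ G.edgeFinset, 2 * f e := by
          refine Finset.sum_congr rfl fun e he => ?_
          rw [← Finset.sum_filter, Finset.sum_const, hcard e he, smul_eq_mul]
      _ = 2 * ∑ e ∈ G.edgeFinset, f e := by rw [Finset.mul_sum]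
  -- sum of labels equals Gauss sum
  have hS : ∑ e ∈ G.edgeFinset, f e = ∑ k ∈ Finset.Icc 1 q, k := by
    refine Finset.sum_nbij f (fun a ha => ?_) hbij.injOn ?_ (fun a _ => rfl)
    · have := hbij.mapsTo (by simpa using ha)
      simpa [Finset.mem_Icc, Set.mem_Icc] using this
    · rw [Finset.coe_Icc]; exact hbij.surjOn
  have hg : (∑ k ∈ Finset.Icc 1 q, k) * 2 = (q + 1) * q := by
    have hins : Finset.range (q + 1) = insert 0 (Finset.Icc 1 q) := by
      ext x; simp [Finset.mem_Icc]; omega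
    have hgs := Finset.sum_range_id_mul_two (q + 1)
    rw [hins, Finset.sum_insert (by simp)] at hgs
    simpa using hgs
  -- sum over all of ZMod p
  have hZ : ∑ x : ZMod p, x = ((p * (p - 1) / 2 : ℕ) : ZMod p) := by
    have h1 : ∑ x : ZMod p, x = ∑ x : ZMod p, ((x.val : ℕ) : ZMod p) := by
      simp [ZMod.natCast_val, ZMod.cast_id]
    have h2 : ∑ x : ZMod p, x.val = ∑ i ∈ Finset.range p, i := by
      refine Finset.sum_nbij ZMod.val (fun a _ => Finset.mem_range.mpr (ZMod.val_lt a))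
        (fun a _ b _ hab => ZMod.val_injective p hab) (fun i hi => ?_) (fun a _ => rfl)
      exact ⟨(i : ZMod p), Finset.mem_univ _, ZMod.val_cast_of_lt (Finset.mem_range.mp (by simpa using hi))⟩
    rw [h1, ← Nat.cast_sum, h2, Finset.sum_range_id]
  -- key congruence
  have key : ((q ^ 2 + q : ℕ) : ZMod p) = ((p * (p - 1) / 2 : ℕ) : ZMod p) := by
    calc ((q ^ 2 + q : ℕ) : ZMod p)
        = ((∑ v : V, ∑ e ∈ G.incidenceFinset v, f e : ℕ) : ZMod p) := by
          rw [hA, hS]; congr 1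
          have : (q + 1) * q = q ^ 2 + q := by ring
          omega
      _ = ∑ v : V, ((∑ e ∈ G.incidenceFinset v, f e : ℕ) : ZMod p) := by push_cast; rfl
      _ = ∑ x : ZMod p, x := hplus.sum_comp (id : ZMod p → ZMod p)
      _ = _ := hZ
  have hmod : q ^ 2 + q ≡ p * (p - 1) / 2 [MOD p] := (ZMod.natCast_eq_natCast_iff _ _ _).mp key
  have hdvd : (p : ℤ) ∣ ((p * (p - 1) / 2 : ℕ) : ℤ) - ((q ^ 2 + q : ℕ) : ℤ) :=
    (Nat.modEq_iff_dvd).mp hmod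
  have hp1 : 1 ≤ p := Nat.one_le_iff_ne_zero.mpr hp0
  have hT2 : p * (p - 1) = 2 * (p * (p - 1) / 2) := by
    have heven : 2 ∣ p * (p - 1) := by
      rcases Nat.even_or_odd p with hp' | hp'
      · exact Dvd.dvd.mul_right hp'.two_dvd _
      · exact Dvd.dvd.mul_left (Nat.Odd.sub_odd hp' odd_one).two_dvd _
    omega
  have hcast : (p : ℤ) * ((p : ℤ) - 1) / 2 = ((p * (p - 1) / 2 : ℕ) : ℤ) := by
    have h3 : (p : ℤ) * ((p : ℤ) - 1) = 2 * ((p * (p - 1) / 2 : ℕ) : ℤ) := by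
      calc (p : ℤ) * ((p : ℤ) - 1) = ((p * (p - 1) : ℕ) : ℤ) := by
            rw [Nat.cast_mul, Nat.cast_sub hp1, Nat.cast_one]
        _ = 2 * ((p * (p - 1) / 2 : ℕ) : ℤ) := by exact_mod_cast hT2
    rw [h3, Int.mul_ediv_cancel_left _ two_ne_zero]
  rw [hcast]
  have hq2 : ((q ^ 2 + q : ℕ) : ℤ) = (q : ℤ) ^ 2 + (q : ℤ) := by push_cast; ring
  rw [← hq2]
  exact dvd_sub_comm.mp hdvd
end

section
/- The set of all integer solutions (n, k) to the Diophantine equation 7n² - 5n - 2nk - 2k = 0 is exactly {(11,33), (3,6), (2,3), (0,0), (-13,-52), (-5,-25), (-4,-22), (-2,-19)}. -/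
theorem diophantine_solutions :
    {p : ℤ × ℤ | 7 * p.1 ^ 2 - 5 * p.1 - 2 * p.1 * p.2 - 2 * p.2 = 0} =
      {(11, 33), (3, 6), (2, 3), (0, 0), (-13, -52), (-5, -25), (-4, -22), (-2, -19)} := by
  ext ⟨n, k⟩
  simp only [Set.mem_setOf_eq, Set.mem_insert_iff, Set.mem_singleton_iff, Prod.mk.injEq]
  constructor
  · intro h
    have hd : (n + 1) ∣ 12 := ⟨2 * k - (7 * n - 12), by linear_combination h⟩
    have h1 : n + 1 ≤ 12 := Int.le_of_dvd (by norm_num) hd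
    have h2 : -(n + 1) ≤ 12 := Int.le_of_dvd (by norm_num) hd.neg_left
    have h1' : -13 ≤ n := by omega
    have h2' : n ≤ 11 := by omega
    interval_cases n <;> omega
  · rintro (⟨h1, h2⟩ | ⟨h1, h2⟩ | ⟨h1, h2⟩ | ⟨h1, h2⟩ | ⟨h1, h2⟩ | ⟨h1, h2⟩ | ⟨h1, h2⟩ | ⟨h1, h2⟩) <;>
      subst h1 <;> subst h2 <;> norm_num
end

section
/- The only positive integer solutions (n, k) of 7n² - 5n = (2n+2)k are (2, 3), (3, 6), and (11, 33). -/
theorem positive_solutions (n k : ℤ) (hn : 0 < n) (hk : 0 < k) :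
    7 * n ^ 2 - 5 * n = (2 * n + 2) * k ↔
      (n = 2 ∧ k = 3) ∨ (n = 3 ∧ k = 6) ∨ (n = 11 ∧ k = 33) := by
  constructor
  · intro h
    have hd : (n + 1) ∣ 12 := ⟨2 * k - 7 * n + 12, by linear_combination h⟩
    have h1 : n + 1 ≤ 12 := Int.le_of_dvd (by norm_num) hd
    have h2 : n ≤ 11 := by omega
    interval_cases n <;> omega
  · rintro (⟨rfl, rfl⟩ | ⟨rfl, rfl⟩ | ⟨rfl, rfl⟩) <;> ring
end

section
/- The fan graph F_{1,11} (the join of a single vertex with the path P_11; 12 vertices and 21 edges) is edge-graceful. -/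
set_option maxRecDepth 10000

/-- The usual fan graph `F_{1,n}`: vertex `0` is the apex joined to every vertex of the
path `1, 2, …, n`. -/
def fanGraph (n : ℕ) : SimpleGraph (Fin (n + 1)) :=
  SimpleGraph.fromRel (fun a b => a = 0 ∨ (a ≠ 0 ∧ (b : ℕ) = (a : ℕ) + 1))

instance (n : ℕ) : DecidableRel (fanGraph n).Adj := fun a b =>
  decidable_of_iff _ (SimpleGraph.fromRel_adj _ a b).symm

def tbl : ℕ → ℕ → ℕ
  | 0, 1 => 3 | 0, 2 => 1 | 0, 3 => 15 | 0, 4 => 19 | 0, 5 => 16 | 0, 6 => 6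
  | 0, 7 => 7 | 0, 8 => 13 | 0, 9 => 21 | 0, 10 => 9 | 0, 11 => 11
  | 1, 2 => 18 | 2, 3 => 17 | 3, 4 => 14 | 4, 5 => 20 | 5, 6 => 2 | 6, 7 => 8
  | 7, 8 => 5 | 8, 9 => 12 | 9, 10 => 10 | 10, 11 => 4
  | _, _ => 0

def lab : Sym2 (Fin 12) → ℕ :=
  Sym2.lift ⟨fun a b => tbl (min a.val b.val) (max a.val b.val), fun a b => by
    simp [min_comm, max_comm]⟩
theorem fan11_edge_graceful : EdgeGraceful (fanGraph 11) := by
  refine ⟨lab, ?_, by decide⟩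
  have h1 : ∀ x ∈ (fanGraph 11).edgeFinset, ∀ y ∈ (fanGraph 11).edgeFinset,
      lab x = lab y → x = y := by decide
  have h2 : Finset.image lab (fanGraph 11).edgeFinset = Finset.Icc 1 21 := by decide
  have hcard : (fanGraph 11).edgeFinset.card = 21 := by decide
  rw [hcard]
  have hinj : Set.InjOn lab ((fanGraph 11).edgeFinset : Set (Sym2 (Fin 12))) :=
    fun x hx y hy => h1 x hx y hy
  have := hinj.bijOn_image
  rwa [← Finset.coe_image, h2, Finset.coe_Icc] at this
end

section
/- For a positive integer n with n ∉ {2, 3, 11}, the fan graph F_{1,n} is not edge-graceful. -/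
open Fin.NatCast

private lemma sum_sum_incidence {V : Type*} [Fintype V] [DecidableEq V]
    (G : SimpleGraph V) [DecidableRel G.Adj] (f : Sym2 V → ℕ) :
    ∑ v, ∑ e ∈ G.incidenceFinset v, f e = ∑ e ∈ G.edgeFinset, 2 * f e := by
  simp_rw [SimpleGraph.incidenceFinset_eq_filter, Finset.sum_filter]
  rw [Finset.sum_comm]
  refine Finset.sum_congr rfl ?_
  intro e he
  rw [Finset.sum_ite, Finset.sum_const, Finset.sum_const_zero, add_zero, smul_eq_mul]
  induction e with
  | h a b =>
    have hab : a ≠ b := (SimpleGraph.mem_edgeFinset.mp he).ne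
    have : Finset.univ.filter (fun v => v ∈ s(a,b)) = {a, b} := by
      ext v; simp [Sym2.mem_iff]
    rw [this, Finset.card_insert_of_notMem (by simpa using hab), Finset.card_singleton]

private def fanEnc (n : ℕ) (k : ℕ) : Sym2 (Fin (n+1)) :=
  if k < n then s((0 : Fin (n+1)), ((k+1 : ℕ) : Fin (n+1)))
  else s(((k - n + 1 : ℕ) : Fin (n+1)), ((k - n + 2 : ℕ) : Fin (n+1)))

private lemma fan_edgeFinset (n : ℕ) (hn : 0 < n) :
    (fanGraph n).edgeFinset = (Finset.range (2*n-1)).image (fanEnc n) := by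
  have vcast : ∀ m : ℕ, m < n + 1 → ((m : Fin (n+1)) : ℕ) = m := fun m hm =>
    Fin.val_cast_of_lt hm
  ext e
  induction e with
  | h a b =>
    simp only [SimpleGraph.mem_edgeFinset, Finset.mem_image, Finset.mem_range,
      SimpleGraph.mem_edgeSet]
    constructor
    · intro hadj
      rw [fanGraph, SimpleGraph.fromRel_adj] at hadj
      obtain ⟨hab, h⟩ := hadj
      have ha1 : (a : ℕ) < n + 1 := a.isLt
      have hb1 : (b : ℕ) < n + 1 := b.isLt
      rcases h with (h0 | ⟨ha, hb⟩) | (h0 | ⟨hb, ha⟩)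
      · -- a = 0
        have hb0 : (b : ℕ) ≠ 0 := by
          intro h
          exact hab (by rw [h0]; exact (Fin.ext (by simp [h])).symm)
        refine ⟨(b : ℕ) - 1, by omega, ?_⟩
        rw [fanEnc, if_pos (by omega)]
        have : ((b : ℕ) - 1 + 1 : ℕ) = (b : ℕ) := by omega
        rw [this, Fin.cast_val_eq_self, h0]
      · -- a ≠ 0, b = a + 1
        have ha0 : (a : ℕ) ≠ 0 := fun h => ha (Fin.ext (by simp [h]))
        have hbn : (b : ℕ) ≤ n := by omega
        refine ⟨n + ((a : ℕ) - 1), by omega, ?_⟩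
        rw [fanEnc, if_neg (by omega)]
        have e1 : (n + ((a : ℕ) - 1) - n + 1 : ℕ) = (a : ℕ) := by omega
        have e2 : (n + ((a : ℕ) - 1) - n + 2 : ℕ) = (b : ℕ) := by omega
        rw [e1, e2, Fin.cast_val_eq_self, Fin.cast_val_eq_self]
      · -- b = 0
        have ha0 : (a : ℕ) ≠ 0 := by
          intro h
          exact hab (by rw [h0]; exact Fin.ext (by simp [h]))
        refine ⟨(a : ℕ) - 1, by omega, ?_⟩
        rw [fanEnc, if_pos (by omega)]
        have : ((a : ℕ) - 1 + 1 : ℕ) = (a : ℕ) := by omega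
        rw [this, Fin.cast_val_eq_self, h0, Sym2.eq_swap]
      · -- b ≠ 0, a = b + 1
        have hb0 : (b : ℕ) ≠ 0 := fun h => hb (Fin.ext (by simp [h]))
        have han : (a : ℕ) ≤ n := by omega
        refine ⟨n + ((b : ℕ) - 1), by omega, ?_⟩
        rw [fanEnc, if_neg (by omega)]
        have e1 : (n + ((b : ℕ) - 1) - n + 1 : ℕ) = (b : ℕ) := by omega
        have e2 : (n + ((b : ℕ) - 1) - n + 2 : ℕ) = (a : ℕ) := by omega
        rw [e1, e2, Fin.cast_val_eq_self, Fin.cast_val_eq_self, Sym2.eq_swap]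
    · rintro ⟨k, hk, he⟩
      rw [← SimpleGraph.mem_edgeSet, ← he, fanEnc]
      by_cases hkn : k < n
      · rw [if_pos hkn, SimpleGraph.mem_edgeSet, fanGraph, SimpleGraph.fromRel_adj]
        have hv : (((k+1 : ℕ) : Fin (n+1)) : ℕ) = k + 1 := vcast _ (by omega)
        refine ⟨?_, Or.inl (Or.inl rfl)⟩
        intro h
        rw [Fin.ext_iff, Fin.val_zero, hv] at h
        omega
      · rw [if_neg hkn, SimpleGraph.mem_edgeSet, fanGraph, SimpleGraph.fromRel_adj]
        have h1 : (((k - n + 1 : ℕ) : Fin (n+1)) : ℕ) = k - n + 1 := vcast _ (by omega)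
        have h2 : (((k - n + 2 : ℕ) : Fin (n+1)) : ℕ) = k - n + 2 := vcast _ (by omega)
        refine ⟨?_, Or.inl (Or.inr ⟨?_, by rw [h1, h2]⟩)⟩
        · intro h
          rw [Fin.ext_iff, h1, h2] at h
          omega
        · intro h
          rw [Fin.ext_iff, h1, Fin.val_zero] at h
          omega

private lemma fanEnc_injOn (n : ℕ) (hn : 0 < n) :
    Set.InjOn (fanEnc n) (Finset.range (2*n-1)) := by
  have vcast : ∀ m : ℕ, m < n + 1 → ((m : Fin (n+1)) : ℕ) = m := fun m hm =>
    Fin.val_cast_of_lt hm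
  intro k hk l hl h
  simp only [Finset.coe_range, Set.mem_Iio] at hk hl
  rw [fanEnc, fanEnc] at h
  by_cases hkn : k < n <;> by_cases hln : l < n
  · rw [if_pos hkn, if_pos hln, Sym2.eq_iff] at h
    rcases h with ⟨-, h2⟩ | ⟨h1, -⟩
    · rw [Fin.ext_iff, vcast _ (by omega), vcast _ (by omega)] at h2; omega
    · rw [Fin.ext_iff, Fin.val_zero, vcast _ (by omega)] at h1; omega
  · rw [if_pos hkn, if_neg hln, Sym2.eq_iff] at h
    rcases h with ⟨h1, -⟩ | ⟨h1, -⟩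
    · rw [Fin.ext_iff, Fin.val_zero, vcast _ (by omega)] at h1; omega
    · rw [Fin.ext_iff, Fin.val_zero, vcast _ (by omega)] at h1; omega
  · rw [if_neg hkn, if_pos hln, Sym2.eq_iff] at h
    rcases h with ⟨h1, -⟩ | ⟨-, h2⟩
    · rw [Fin.ext_iff, Fin.val_zero, vcast _ (by omega)] at h1; omega
    · rw [Fin.ext_iff, Fin.val_zero, vcast _ (by omega)] at h2; omega
  · rw [if_neg hkn, if_neg hln, Sym2.eq_iff] at h
    rcases h with ⟨h1, -⟩ | ⟨h1, h2⟩
    · rw [Fin.ext_iff, vcast _ (by omega), vcast _ (by omega)] at h1; omega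
    · rw [Fin.ext_iff, vcast _ (by omega), vcast _ (by omega)] at h1
      rw [Fin.ext_iff, vcast _ (by omega), vcast _ (by omega)] at h2
      omega

private lemma fan_card_edges (n : ℕ) (hn : 0 < n) :
    (fanGraph n).edgeFinset.card = 2*n - 1 := by
  rw [fan_edgeFinset n hn, Finset.card_image_of_injOn (fanEnc_injOn n hn),
    Finset.card_range]

theorem fan_not_edge_graceful (n : ℕ) (hn : 0 < n) (h2 : n ≠ 2) (h3 : n ≠ 3)
    (h11 : n ≠ 11) : ¬ EdgeGraceful (fanGraph n) := by
  rintro ⟨f, hbij, hg⟩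
  rw [show Fintype.card (Fin (n+1)) = n+1 from Fintype.card_fin _] at hg
  rw [fan_card_edges n hn] at hbij
  -- sum of labels over all edges
  have hsumf : ∑ e ∈ (fanGraph n).edgeFinset, f e = ∑ k ∈ Finset.Icc 1 (2*n-1), k := by
    refine Finset.sum_bij (fun e _ => f e) ?_ ?_ ?_ (fun a ha => rfl)
    · intro e he
      have := hbij.mapsTo (Finset.mem_coe.mpr he)
      rw [Set.mem_Icc] at this
      exact Finset.mem_Icc.mpr this
    · intro e1 hh1 e2 hh2 hEq
      exact hbij.injOn (Finset.mem_coe.mpr hh1) (Finset.mem_coe.mpr hh2) hEq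
    · intro b hb
      obtain ⟨e, he, hfe⟩ := hbij.surjOn (by rw [Set.mem_Icc]; exact Finset.mem_Icc.mp hb)
      exact ⟨e, Finset.mem_coe.mp he, hfe⟩
  have hIcc : ∑ i ∈ Finset.range (2*n), i = ∑ k ∈ Finset.Icc 1 (2*n-1), k := by
    rw [Finset.range_eq_Ico, Finset.sum_eq_sum_Ico_succ_bot (by omega)]
    have h1 : (2*n) = (2*n-1)+1 := by omega
    rw [h1, Finset.Ico_add_one_right_eq_Icc, zero_add]
    norm_num
  -- total sum of vertex label contributions
  have hT : ∑ v, ∑ e ∈ (fanGraph n).incidenceFinset v, f e = 2*n*(2*n-1) := by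
    rw [sum_sum_incidence, ← Finset.mul_sum, hsumf, ← hIcc, mul_comm,
      Finset.sum_range_id_mul_two]
  -- the sum over ZMod (n+1)
  have hcast : Function.Bijective (fun i : Fin (n+1) => ((i : ℕ) : ZMod (n+1))) := by
    constructor
    · intro i j hij
      apply Fin.ext
      have := congrArg ZMod.val hij
      rwa [ZMod.val_cast_of_lt i.isLt, ZMod.val_cast_of_lt j.isLt] at this
    · intro x
      exact ⟨⟨x.val, x.val_lt⟩, ZMod.natCast_rightInverse x⟩
  have hZ : ∑ x : ZMod (n+1), x = ((∑ i ∈ Finset.range (n+1), i : ℕ) : ZMod (n+1)) := by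
    rw [Nat.cast_sum, ← Fin.sum_univ_eq_sum_range (fun i => ((i : ℕ) : ZMod (n+1)))]
    exact (Fintype.sum_bijective _ hcast _ _ (fun i => rfl)).symm
  -- main congruence
  have hmain : ((2*n*(2*n-1) : ℕ) : ZMod (n+1))
      = ((∑ i ∈ Finset.range (n+1), i : ℕ) : ZMod (n+1)) := by
    rw [← hT, ← hZ, Nat.cast_sum]
    exact Fintype.sum_bijective _ hg _ _ (fun v => rfl)
  set R := ∑ i ∈ Finset.range (n+1), i with hR
  have hR2 : R * 2 = (n+1)*n := by
    rw [hR, Finset.sum_range_id_mul_two]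
    simp
  have hdvd : ((n+1 : ℕ) : ℤ) ∣ (R : ℤ) - (2*n*(2*n-1) : ℕ) :=
    (Nat.modEq_iff_dvd).mp ((ZMod.natCast_eq_natCast_iff _ _ _).mp hmain)
  rcases Nat.even_or_odd n with he | ho
  · -- n even, n ≥ 4
    have hn4 : 4 ≤ n := by
      have := Nat.even_iff.mp he; omega
    obtain ⟨k, hk⟩ : ∃ k, n = 2*k+4 := ⟨(n-4)/2, by have := Nat.even_iff.mp he; omega⟩
    subst hk
    have hRval : R = (2*k+5)*(k+2) := by
      have : ((2*k+5)*(k+2))*2 = (2*k+4+1)*(2*k+4) := by ring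
      omega
    have hsub : (2*(2*k+4)-1 : ℕ) = 4*k+7 := by omega
    rw [hRval, hsub] at hdvd
    have h6 : ((2*k+5 : ℕ) : ℤ) ∣ 6 := by
      have heq : (6 : ℤ) = -(((((2*k+5)*(k+2) : ℕ) : ℤ)) - ((2*(2*k+4)*(4*k+7) : ℕ) : ℤ))
          - ((2*k+5 : ℕ) : ℤ) * (7*k+8) := by
        push_cast
        ring
      rw [heq]
      exact dvd_sub (dvd_neg.mpr (by exact_mod_cast hdvd)) ⟨7*k+8, rfl⟩
    have hle : (2*k+5 : ℤ) ≤ 6 := by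
      have := Int.le_of_dvd (by norm_num) h6
      exact_mod_cast this
    have hk0 : k = 0 := by omega
    subst hk0
    norm_num at h6
  · -- n odd
    obtain ⟨m, hm⟩ := ho
    subst hm
    have hRval : R = (m+1)*(2*m+1) := by
      have : ((m+1)*(2*m+1))*2 = (2*m+1+1)*(2*m+1) := by ring
      omega
    have hsub : (2*(2*m+1)-1 : ℕ) = 4*m+1 := by omega
    rw [hRval, hsub] at hdvd
    have hd : ((2*m+2 : ℕ) : ℤ) ∣ (m : ℤ) - 5 := by
      have heq : (m : ℤ) - 5 = ((((m+1)*(2*m+1) : ℕ) : ℤ) - ((2*(2*m+1)*(4*m+1) : ℕ) : ℤ))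
          + ((2*m+2 : ℕ) : ℤ) * (7*m - 2) := by
        push_cast
        ring
      rw [heq]
      exact dvd_add (by exact_mod_cast hdvd) ⟨7*m - 2, rfl⟩
    have hm1 : m ≠ 1 := by omega
    have hm5 : m ≠ 5 := by omega
    by_cases hm0 : m = 0
    · subst hm0
      norm_num at hd
    · have habs : ((m : ℤ) - 5).natAbs < ((2*m+2 : ℕ) : ℤ).natAbs := by
        push_cast
        omega
      have := Int.eq_zero_of_dvd_of_natAbs_lt_natAbs hd habs
      omega
end

section
/- Among all fan graphs F_{1,n} with n a positive integer, exactly F_{1,2}, F_{1,3}, and F_{1,11} are edge-graceful. -/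
lemma card_mem_sym2 {V : Type*} [Fintype V] [DecidableEq V] (e : Sym2 V) (he : ¬ e.IsDiag) :
    (Finset.univ.filter (· ∈ e)).card = 2 := by
  induction e using Sym2.ind with
  | _ a b =>
    rw [Sym2.mk_isDiag_iff] at he
    have h : Finset.univ.filter (· ∈ s(a,b)) = {a, b} := by
      ext v; simp [Sym2.mem_iff]
    rw [h, Finset.card_insert_of_notMem (by simpa using he), Finset.card_singleton]

lemma handshake {V : Type*} [Fintype V] [DecidableEq V] (G : SimpleGraph V)
    [DecidableRel G.Adj] (f : Sym2 V → ℕ) :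
    ∑ v, ∑ e ∈ G.incidenceFinset v, f e = 2 * ∑ e ∈ G.edgeFinset, f e := by
  simp_rw [SimpleGraph.incidenceFinset_eq_filter, Finset.sum_filter]
  rw [Finset.sum_comm, Finset.mul_sum]
  refine Finset.sum_congr rfl fun e he => ?_
  rw [← Finset.sum_filter, Finset.sum_const, card_mem_sym2 e
    (SimpleGraph.not_isDiag_of_mem_edgeSet G (SimpleGraph.mem_edgeFinset.mp he))]
  simp [mul_comm]

lemma sum_cond {V : Type*} [Fintype V] [DecidableEq V] (G : SimpleGraph V)
    [DecidableRel G.Adj] [Nonempty V] (h : EdgeGraceful G) :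
    ((2 * ∑ k ∈ Finset.Icc 1 G.edgeFinset.card, k : ℕ) : ZMod (Fintype.card V))
      = ∑ x : ZMod (Fintype.card V), x := by
  haveI : NeZero (Fintype.card V) := ⟨Fintype.card_ne_zero⟩
  obtain ⟨f, hbij, hvert⟩ := h
  have himg : G.edgeFinset.image f = Finset.Icc 1 G.edgeFinset.card := by
    apply Finset.coe_injective
    rw [Finset.coe_image, hbij.image_eq, Finset.coe_Icc]
  have hE : ∑ e ∈ G.edgeFinset, f e = ∑ k ∈ Finset.Icc 1 G.edgeFinset.card, k := by
    rw [← himg, Finset.sum_image (fun x hx y hy => hbij.injOn hx hy)]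
  have hv : ∑ v : V, ((∑ e ∈ G.incidenceFinset v, f e : ℕ) : ZMod (Fintype.card V))
      = ∑ x : ZMod (Fintype.card V), x :=
    Fintype.sum_bijective _ hvert _ id (fun x => rfl)
  rw [← hE, ← handshake, Nat.cast_sum, hv]

lemma sum_cond' {V : Type*} [Fintype V] [DecidableEq V] (G : SimpleGraph V)
    [DecidableRel G.Adj] [Nonempty V] (h : EdgeGraceful G) (p : ℕ) [NeZero p]
    (hp : Fintype.card V = p) :
    ((2 * ∑ k ∈ Finset.Icc 1 G.edgeFinset.card, k : ℕ) : ZMod p)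
      = ∑ x : ZMod p, x := by
  subst hp; exact sum_cond G h

lemma sum_add_sum_zero (p : ℕ) [NeZero p] :
    (∑ x : ZMod p, x) + ∑ x : ZMod p, x = 0 := by
  have h : (∑ x : ZMod p, x) = ∑ x : ZMod p, -x :=
    Fintype.sum_bijective (fun x => -x) (Equiv.neg (ZMod p)).bijective _ _ (fun x => (neg_neg x).symm)
  nth_rewrite 2 [h]
  rw [← Finset.sum_add_distrib]
  simp

lemma fan_adj (n : ℕ) (a b : Fin (n+1)) : (fanGraph n).Adj a b ↔
    a ≠ b ∧ ((a:ℕ) = 0 ∨ (b:ℕ) = 0 ∨ (b:ℕ) = (a:ℕ) + 1 ∨ (a:ℕ) = (b:ℕ) + 1) := by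
  rw [fanGraph, SimpleGraph.fromRel_adj]
  have h0 : ∀ c : Fin (n+1), c = 0 ↔ (c:ℕ) = 0 := by
    intro c; rw [Fin.ext_iff]; simp
  constructor
  · rintro ⟨hab, h | h⟩ <;> rw [h0] at * <;> refine ⟨hab, ?_⟩ <;> tauto
  · rintro ⟨hab, h⟩
    refine ⟨hab, ?_⟩
    simp only [h0] at *
    have hab' : (a:ℕ) ≠ (b:ℕ) := fun h => hab (Fin.ext h)
    rcases h with h | h | h | h
    · left; left; exact h
    · right; left; exact h
    · by_cases ha : (a:ℕ) = 0
      · left; left; exact ha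
      · left; right; exact ⟨fun h' => ha (by simp only [h', Fin.val_zero]), h⟩
    · by_cases hb : (b:ℕ) = 0
      · right; left; exact hb
      · right; right; exact ⟨fun h' => hb (by simp only [h', Fin.val_zero]), h⟩

lemma fan_edgeFinset_s11 (n : ℕ) : (fanGraph n).edgeFinset =
    ((Finset.range n).image fun i => s((0 : Fin (n+1)), ⟨min (i+1) n, by omega⟩))
    ∪ ((Finset.range (n-1)).image fun i =>
        s((⟨min (i+1) n, by omega⟩ : Fin (n+1)), ⟨min (i+2) n, by omega⟩)) := by
  ext e
  induction e using Sym2.ind with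
  | _ a b =>
    rw [SimpleGraph.mem_edgeFinset, SimpleGraph.mem_edgeSet, fan_adj]
    simp only [Finset.mem_union, Finset.mem_image, Finset.mem_range, Sym2.eq, Sym2.rel_iff',
      Prod.mk.injEq, Prod.swap_prod_mk, Fin.ext_iff, Fin.val_zero, ne_eq]
    constructor
    · rintro ⟨hab, h⟩
      have hb : (b:ℕ) < n + 1 := b.isLt
      have ha : (a:ℕ) < n + 1 := a.isLt
      rcases h with h | h | h | h
      · left; exact ⟨(b:ℕ) - 1, by omega, Or.inl ⟨by omega, by omega⟩⟩
      · left; exact ⟨(a:ℕ) - 1, by omega, Or.inr ⟨by omega, by omega⟩⟩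
      · by_cases h0 : (a:ℕ) = 0
        · left; exact ⟨(b:ℕ) - 1, by omega, Or.inl ⟨by omega, by omega⟩⟩
        · right; exact ⟨(a:ℕ) - 1, by omega, Or.inl ⟨by omega, by omega⟩⟩
      · by_cases h0 : (b:ℕ) = 0
        · left; exact ⟨(a:ℕ) - 1, by omega, Or.inr ⟨by omega, by omega⟩⟩
        · right; exact ⟨(b:ℕ) - 1, by omega, Or.inr ⟨by omega, by omega⟩⟩
    · rintro (⟨i, hi, ⟨h1, h2⟩ | ⟨h1, h2⟩⟩ | ⟨i, hi, ⟨h1, h2⟩ | ⟨h1, h2⟩⟩) <;>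
        exact ⟨by omega, by omega⟩

lemma fan_card (n : ℕ) (hn : 0 < n) : (fanGraph n).edgeFinset.card = 2 * n - 1 := by
  rw [fan_edgeFinset_s11]
  rw [Finset.card_union_of_disjoint, Finset.card_image_of_injOn, Finset.card_image_of_injOn,
    Finset.card_range, Finset.card_range]
  · omega
  · intro i hi j hj h
    simp only [Finset.coe_range, Set.mem_Iio] at hi hj
    simp only [Sym2.eq, Sym2.rel_iff', Prod.mk.injEq, Prod.swap_prod_mk, Fin.ext_iff,
      Fin.val_zero] at h
    omega
  · intro i hi j hj h
    simp only [Finset.coe_range, Set.mem_Iio] at hi hj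
    simp only [Sym2.eq, Sym2.rel_iff', Prod.mk.injEq, Prod.swap_prod_mk, Fin.ext_iff,
      Fin.val_zero] at h
    omega
  · rw [Finset.disjoint_left]
    rintro e he he'
    simp only [Finset.mem_image, Finset.mem_range] at he he'
    obtain ⟨i, hi, rfl⟩ := he
    obtain ⟨j, hj, h⟩ := he'
    simp only [Sym2.eq, Sym2.rel_iff', Prod.mk.injEq, Prod.swap_prod_mk, Fin.ext_iff,
      Fin.val_zero] at h
    omega

def g2 : Fin 3 → Fin 3 → ℕ := fun a b =>
  if a = 0 then ![0,1,2] b else if b = 0 then ![0,1,2] a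
  else if (a:ℕ)+1 = b then ![0,3,0] a else if (b:ℕ)+1 = a then ![0,3,0] b else 0

def f2 : Sym2 (Fin 3) → ℕ := Sym2.lift ⟨g2, by decide⟩

def g3 : Fin 4 → Fin 4 → ℕ := fun a b =>
  if a = 0 then ![0,1,4,5] b else if b = 0 then ![0,1,4,5] a
  else if (a:ℕ)+1 = b then ![0,2,3,0] a else if (b:ℕ)+1 = a then ![0,2,3,0] b else 0

def f3 : Sym2 (Fin 4) → ℕ := Sym2.lift ⟨g3, by decide⟩

def g11 : Fin 12 → Fin 12 → ℕ := fun a b =>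
  if a = 0 then ![0,21,8,7,17,20,13,16,9,1,4,19] b
  else if b = 0 then ![0,21,8,7,17,20,13,16,9,1,4,19] a
  else if (a:ℕ)+1 = b then ![0,14,12,2,5,15,3,11,18,10,6,0] a
  else if (b:ℕ)+1 = a then ![0,14,12,2,5,15,3,11,18,10,6,0] b else 0

def f11 : Sym2 (Fin 12) → ℕ := Sym2.lift ⟨g11, by decide⟩

lemma eg_of_img {n : ℕ} (f : Sym2 (Fin (n+1)) → ℕ)
    (himg : (fanGraph n).edgeFinset.image f = Finset.Icc 1 (fanGraph n).edgeFinset.card)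
    (hb : Function.Bijective
      (fun v : Fin (n+1) => ((∑ e ∈ (fanGraph n).incidenceFinset v, f e : ℕ)
        : ZMod (Fintype.card (Fin (n+1)))))) :
    EdgeGraceful (fanGraph n) := by
  refine ⟨f, ?_, hb⟩
  have h1 : Set.InjOn f ↑(fanGraph n).edgeFinset := by
    rw [← Finset.card_image_iff, himg, Nat.card_Icc]
    simp
  rw [show (Set.Icc 1 (fanGraph n).edgeFinset.card)
      = ↑(Finset.Icc 1 (fanGraph n).edgeFinset.card) from (Finset.coe_Icc _ _).symm,
    ← himg, Finset.coe_image]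
  exact h1.bijOn_image

theorem fan_edge_graceful_iff (n : ℕ) (hn : 0 < n) :
    EdgeGraceful (fanGraph n) ↔ n = 2 ∨ n = 3 ∨ n = 11 := by
  constructor
  · intro h
    have hsum : ((2 * ∑ k ∈ Finset.Icc 1 (fanGraph n).edgeFinset.card, k : ℕ) : ZMod (n+1))
        = ∑ x : ZMod (n+1), x := sum_cond' _ h _ (Fintype.card_fin _)
    rw [fan_card n hn] at hsum
    have hn11 : n ≤ 11 := by
      by_cases h1 : n = 1
      · omega
      -- Gauss sum
      have hins : Finset.range (2*n) = insert 0 (Finset.Icc 1 (2*n-1)) := by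
        ext x; simp only [Finset.mem_range, Finset.mem_insert, Finset.mem_Icc]; omega
      have hg : (∑ k ∈ Finset.Icc 1 (2*n-1), k) * 2 = (2*n) * (2*n-1) := by
        rw [← Finset.sum_range_id_mul_two (2*n), hins,
          Finset.sum_insert (by simp), zero_add]
      -- double the congruence
      have hzero : (((2 * ∑ k ∈ Finset.Icc 1 (2*n-1), k) * 2 : ℕ) : ZMod (n+1)) = 0 := by
        rw [mul_two, Nat.cast_add, hsum, sum_add_sum_zero]
      rw [ZMod.natCast_eq_zero_iff] at hzero
      have hdvd : (n+1) ∣ 2 * ((2*n) * (2*n-1)) := by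
        rw [← hg]; ring_nf at hzero ⊢; exact hzero
      obtain ⟨m, rfl⟩ : ∃ m, n = m + 2 := ⟨n - 2, by omega⟩
      have key : 2 * ((2*(m+2)) * (2*(m+2)-1)) = ((m+2)+1) * (8*(m+2)-12) + 12 := by
        have e1 : 2*(m+2)-1 = 2*m+3 := by omega
        have e2 : 8*(m+2)-12 = 8*m+4 := by omega
        rw [e1, e2]; ring
      have h12 : (m+2+1) ∣ 12 := by
        have hd2 : (m+2+1) ∣ ((m+2)+1) * (8*(m+2)-12) := Dvd.intro _ rfl
        have := Nat.dvd_sub hdvd hd2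
        rwa [key, Nat.add_sub_cancel_left] at this
      have := Nat.le_of_dvd (by norm_num) h12
      omega
    interval_cases n <;> revert hsum <;> decide
  · rintro (rfl | rfl | rfl)
    · exact eg_of_img f2 (by decide) (by decide)
    · exact eg_of_img f3 (by decide) (by decide)
    · exact eg_of_img f11 (by decide) (by decide)
end

section
/- If a graph G with p vertices and q edges has an edge labeling by {1,...,q} whose induced vertex labels modulo p are a bijection onto ZMod p, then q(q+1) ≡ p(p-1)/2 (mod p). -/
theorem lo_congruence {V : Type*} [Fintype V] [DecidableEq V] (G : SimpleGraph V)
    [DecidableRel G.Adj] (f : Sym2 V → ℕ)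
    (hf : Set.BijOn f (G.edgeFinset : Set (Sym2 V)) (Set.Icc 1 G.edgeFinset.card))
    (hbij : Function.Bijective
      (fun v : V => ((∑ e ∈ G.incidenceFinset v, f e : ℕ) : ZMod (Fintype.card V)))) :
    ((G.edgeFinset.card : ℤ) * (G.edgeFinset.card + 1)) ≡
      ((Fintype.card V : ℤ) * ((Fintype.card V : ℤ) - 1) / 2) [ZMOD (Fintype.card V)] := by
  classical
  set p := Fintype.card V with hp
  set q := G.edgeFinset.card with hq
  -- p is positive
  have hp0 : 0 < p := by
    obtain ⟨v, -⟩ := hbij.2 (0 : ZMod p)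
    exact hp ▸ Fintype.card_pos_iff.mpr ⟨v⟩
  -- sum of labels over edges is the Gauss sum
  have hsumf : ∑ e ∈ G.edgeFinset, f e = ∑ k ∈ Finset.Icc 1 q, k := by
    refine Finset.sum_bij (fun e _ => f e) ?_ ?_ ?_ (fun _ _ => rfl)
    · intro e he
      have := hf.mapsTo (by simpa using he)
      simpa [Finset.mem_Icc, Set.mem_Icc] using this
    · intro a ha b hb h
      exact hf.injOn (by simpa using ha) (by simpa using hb) h
    · intro b hb
      obtain ⟨a, ha, rfl⟩ := hf.surjOn (by simpa [Set.mem_Icc] using Finset.mem_Icc.mp hb)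
      exact ⟨a, by simpa using ha, rfl⟩
  have hgauss : 2 * ∑ e ∈ G.edgeFinset, f e = q * (q + 1) := by
    have hins : Finset.range (q + 1) = insert 0 (Finset.Icc 1 q) := by
      ext x
      simp only [Finset.mem_range, Finset.mem_insert, Finset.mem_Icc]
      omega
    have h0 : (0 : ℕ) ∉ Finset.Icc 1 q := by simp
    have h2 := Finset.sum_range_id_mul_two (q + 1)
    rw [hins, Finset.sum_insert h0] at h2
    have h3 : (∑ k ∈ Finset.Icc 1 q, k) * 2 = (q + 1) * q := by simpa using h2
    rw [hsumf, mul_comm, h3, mul_comm]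
  -- double counting: each edge is counted twice
  have hswap : ∑ v, ∑ e ∈ G.incidenceFinset v, f e = 2 * ∑ e ∈ G.edgeFinset, f e := by
    simp_rw [G.incidenceFinset_eq_filter, Finset.sum_filter]
    rw [Finset.sum_comm]
    rw [Finset.mul_sum]
    refine Finset.sum_congr rfl ?_
    intro e he
    have hcard : ({v : V | v ∈ e} : Finset V).card = 2 := by
      induction e with
      | _ a b =>
        have hab : a ≠ b := G.ne_of_adj (by simpa [SimpleGraph.mem_edgeFinset] using he)
        have : ({v : V | v ∈ (s(a, b) : Sym2 V)} : Finset V) = {a, b} := by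
          ext x; simp [Sym2.mem_iff]
        rw [this, Finset.card_insert_of_notMem (by simpa using hab), Finset.card_singleton]
    calc ∑ v : V, (if v ∈ e then f e else 0)
        = ∑ v ∈ ({v : V | v ∈ e} : Finset V), f e := (Finset.sum_filter _ _).symm
      _ = 2 * f e := by rw [Finset.sum_const, hcard, smul_eq_mul]
  -- sum of induced labels equals sum of all elements of ZMod p
  haveI : NeZero p := ⟨hp0.ne'⟩
  have hS : ∑ v : V, ((∑ e ∈ G.incidenceFinset v, f e : ℕ) : ZMod p) = ∑ x : ZMod p, x :=
    Fintype.sum_bijective _ hbij _ _ (fun v => rfl)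
  -- value of the sum of all elements of ZMod p
  have hS2 : ∑ x : ZMod p, x = ((p * (p - 1) / 2 : ℕ) : ZMod p) := by
    have h1 : ∑ x : ZMod p, x = ∑ i ∈ Finset.range p, ((i : ℕ) : ZMod p) := by
      refine (Finset.sum_bij (fun n _ => ((n : ℕ) : ZMod p)) ?_ ?_ ?_ (fun _ _ => rfl)).symm
      · intro n _; exact Finset.mem_univ _
      · intro a ha b hb h
        have := congrArg ZMod.val h
        rwa [ZMod.val_cast_of_lt (Finset.mem_range.mp ha),
          ZMod.val_cast_of_lt (Finset.mem_range.mp hb)] at this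
      · intro x _
        exact ⟨x.val, Finset.mem_range.mpr (ZMod.val_lt x), ZMod.natCast_rightInverse x⟩
    rw [h1, ← Nat.cast_sum, Finset.sum_range_id]
  -- conclude
  have key : (((q : ℤ) * (q + 1) : ℤ) : ZMod p) = (((p : ℤ) * ((p : ℤ) - 1) / 2 : ℤ) : ZMod p) := by
    have hl : (((q : ℤ) * (q + 1) : ℤ) : ZMod p) = ((q * (q + 1) : ℕ) : ZMod p) := by push_cast; ring
    have heven : 2 ∣ p * (p - 1) := by
      have h := Nat.even_mul_succ_self (p - 1)
      rw [Nat.sub_add_cancel hp0, mul_comm] at h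
      exact h.two_dvd
    have hm : 2 * (p * (p - 1) / 2) = p * (p - 1) := Nat.mul_div_cancel' heven
    have hr : ((p : ℤ) * ((p : ℤ) - 1) / 2 : ℤ) = ((p * (p - 1) / 2 : ℕ) : ℤ) := by
      have hcast : (p : ℤ) * ((p : ℤ) - 1) = 2 * ((p * (p - 1) / 2 : ℕ) : ℤ) := by
        have h2 : ((p * (p - 1) : ℕ) : ℤ) = 2 * ((p * (p - 1) / 2 : ℕ) : ℤ) := by
          exact_mod_cast congrArg (Nat.cast : ℕ → ℤ) hm.symm
        rw [← h2, Nat.cast_mul, Nat.cast_pred hp0]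
      rw [hcast, Int.mul_ediv_cancel_left _ two_ne_zero]
    rw [hl, hr, ← hgauss, ← hswap, Nat.cast_sum, hS, hS2, Int.cast_natCast]
  exact (ZMod.intCast_eq_intCast_iff _ _ _).mp key
end
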